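/- For a fractional Brownian motion B with Hurst index H ∈ (0,1) and covariance R(u,v) = (1/2)(u^{2H}+v^{2H}−|u−v|^{2H}), the double integral ∫∫_{[0,1]²} du dv / sqrt(R(u,u)R(v,v) − R(u,v)²) is finite. -/

import Mathlib

/-!
Write `a = u^H`, `b = v^H`, `c = (v - u)^H` for `0 ≤ u ≤ v`. Then `R(u,u) R(v,v) - R(u,v)²` is
Heron's product `(a+b+c)(b+c-a)(c+a-b)(a+b-c)/4` of the "triangle" with sides `a, b, c`. Concavity
of `x ↦ x^H` gives `(m + M)^H ≤ H m^H + M^H` for `m ≤ M`, a quantitative triangle inequality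
`b ≤ a + c - (1 - H) min(a, c)`, whence the determinant is at least `(1-H)/4 · u^{2H} (v-u)^{2H}`.
The integrand is thus bounded by a multiple of `u^{-H} (v-u)^{-H}`, a product of two integrable
singularities in the coordinates `(u, v - u)`.
-/

open MeasureTheory Filter Set ProbabilityTheory

noncomputable section

/-- The covariance function of fractional Brownian motion of Hurst index `H`. -/
def fbmCov (H u v : ℝ) : ℝ := (u ^ (2*H) + v ^ (2*H) - |v - u| ^ (2*H)) / 2

/-- `B` is a fractional Brownian motion of Hurst index `H` under `P`: a centered Gaussian
process with (a.s.) continuous paths on `[0,∞)` and covariance `fbmCov H`. -/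
def IsFBM {Ω : Type*} [MeasurableSpace Ω] (P : Measure Ω) (H : ℝ)
    (B : ℝ → Ω → ℝ) : Prop :=
  (∀ t : ℝ, Measurable (B t)) ∧
  (∀ᵐ ω ∂P, ContinuousOn (fun t => B t ω) (Ici 0)) ∧
  ∀ (m : ℕ) (t : Fin m → ℝ), (∀ i, 0 ≤ t i) → ∀ (c : Fin m → ℝ),
    P.map (fun ω => ∑ i, c i * B (t i) ω) =
      gaussianReal 0 (∑ i, ∑ j, c i * c j * fbmCov H (t i) (t j)).toNNReal

def fbmCovDet (H u v : ℝ) : ℝ := fbmCov H u u * fbmCov H v v - fbmCov H u v ^ 2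

lemma fbmCov_comm (H u v : ℝ) : fbmCov H u v = fbmCov H v u := by
  simp only [fbmCov, abs_sub_comm]; ring

lemma fbmCovDet_comm (H u v : ℝ) : fbmCovDet H u v = fbmCovDet H v u := by
  rw [fbmCovDet, fbmCovDet, fbmCov_comm H u v, mul_comm]

lemma fbmCov_of_le {H u v : ℝ} (hu : 0 ≤ u) (huv : u ≤ v) :
    fbmCov H u v = ((u ^ H) ^ 2 + (v ^ H) ^ 2 - ((v - u) ^ H) ^ 2) / 2 := by
  have hvu : 0 ≤ v - u := sub_nonneg.2 huv
  simp only [fbmCov, abs_of_nonneg hvu, ← Real.rpow_mul_natCast hu, ← Real.rpow_mul_natCast hvu,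
    ← Real.rpow_mul_natCast (hu.trans huv), Nat.cast_ofNat, mul_comm H]

lemma fbmCov_self {H u : ℝ} (hH : H ≠ 0) (hu : 0 ≤ u) : fbmCov H u u = (u ^ H) ^ 2 := by
  rw [fbmCov_of_le hu le_rfl, sub_self, Real.zero_rpow hH]; ring

lemma fbmCovDet_eq_heron {H u v : ℝ} (hH : H ≠ 0) (hu : 0 ≤ u) (huv : u ≤ v) :
    fbmCovDet H u v = (u ^ H + v ^ H + (v - u) ^ H) * (v ^ H + (v - u) ^ H - u ^ H) *
      ((v - u) ^ H + u ^ H - v ^ H) * (u ^ H + v ^ H - (v - u) ^ H) / 4 := by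
  rw [fbmCovDet, fbmCov_self hH hu, fbmCov_self hH (hu.trans huv), fbmCov_of_le hu huv]
  ring

lemma fbmCovDet_zero_left {H v : ℝ} (hH : H ≠ 0) (hv : 0 ≤ v) : fbmCovDet H 0 v = 0 := by
  rw [fbmCovDet_eq_heron hH le_rfl hv, sub_zero, Real.zero_rpow hH]; ring

lemma fbmCovDet_self (H u : ℝ) : fbmCovDet H u u = 0 := by
  rw [fbmCovDet]; ring

lemma Real.rpow_add_le_mul_rpow_add_rpow {p m M : ℝ} (hp₀ : 0 ≤ p) (hp₁ : p ≤ 1) (hm : 0 ≤ m)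
    (hmM : m ≤ M) : (m + M) ^ p ≤ p * m ^ p + M ^ p := by
  rcases (hm.trans hmM).eq_or_lt with rfl | hM
  · obtain rfl : m = 0 := le_antisymm hmM hm
    simp only [add_zero]
    nlinarith [Real.rpow_nonneg le_rfl p]
  have hconcave : (m + M) ^ p ≤ M ^ p + p * (m * M ^ (p - 1)) := by
    calc (m + M) ^ p = M ^ p * (1 + m / M) ^ p := by
          rw [← Real.mul_rpow hM.le (by positivity)]; congr 1; field_simp; ring
      _ ≤ M ^ p * (1 + p * (m / M)) := by
          gcongr; exact rpow_one_add_le_one_add_mul_self (by linarith [div_nonneg hm hM.le]) hp₀ hp₁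
      _ = M ^ p + p * (m * M ^ (p - 1)) := by
          rw [Real.rpow_sub_one hM.ne']; field_simp
  have hsub : m * M ^ (p - 1) ≤ m ^ p := by
    calc m * M ^ (p - 1) = m ^ p * (m ^ (1 - p) * M ^ (p - 1)) := by
          rw [← mul_assoc, ← Real.rpow_add' hm (show p + (1 - p) ≠ 0 by norm_num), add_sub_cancel,
            Real.rpow_one]
      _ ≤ m ^ p * (M ^ (1 - p) * M ^ (p - 1)) := by gcongr
      _ = m ^ p := by rw [← Real.rpow_add hM, sub_add_sub_cancel, sub_self, Real.rpow_zero,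
          mul_one]
  linarith [mul_le_mul_of_nonneg_left hsub hp₀]

lemma Real.rpow_add_le_add_sub_mul_min {p x y : ℝ} (hp₀ : 0 ≤ p) (hp₁ : p ≤ 1) (hx : 0 ≤ x)
    (hy : 0 ≤ y) : (x + y) ^ p ≤ x ^ p + y ^ p - (1 - p) * min (x ^ p) (y ^ p) := by
  rcases le_total x y with hxy | hyx
  · rw [min_eq_left (Real.rpow_le_rpow hx hxy hp₀)]
    linarith [Real.rpow_add_le_mul_rpow_add_rpow hp₀ hp₁ hx hxy]
  · rw [min_eq_right (Real.rpow_le_rpow hy hyx hp₀), add_comm x]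
    linarith [Real.rpow_add_le_mul_rpow_add_rpow hp₀ hp₁ hy hyx]

lemma mul_sq_mul_sq_le_heron {a b c t : ℝ} (ha : 0 ≤ a) (hc : 0 ≤ c) (hab : a ≤ b) (hcb : c ≤ b)
    (ht : 0 ≤ t) (hb : b ≤ a + c - t * min a c) :
    t * (a ^ 2 * c ^ 2) ≤ (a + b + c) * (b + c - a) * (c + a - b) * (a + b - c) := by
  have hmax : max a c ≤ a + b + c := max_le (by linarith) (by linarith)
  have hmin : 0 ≤ t * min a c := mul_nonneg ht (le_min ha hc)
  calc t * (a ^ 2 * c ^ 2) = max a c * c * (t * min a c) * a := by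
        linear_combination (-(t * a * c)) * min_mul_max a c
    _ ≤ (a + b + c) * (b + c - a) * (c + a - b) * (a + b - c) := by
        gcongr ?_ * ?_ * ?_ * ?_ <;> (repeat' apply mul_nonneg) <;> linarith

lemma fbmCovDet_lower_bound {H u v : ℝ} (hH : H ∈ Ioo (0:ℝ) 1) (hu : 0 ≤ u) (huv : u ≤ v) :
    (1 - H) / 4 * ((u ^ H) ^ 2 * ((v - u) ^ H) ^ 2) ≤ fbmCovDet H u v := by
  have hvu : 0 ≤ v - u := sub_nonneg.2 huv
  have hv : v ^ H ≤ u ^ H + (v - u) ^ H - (1 - H) * min (u ^ H) ((v - u) ^ H) := by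
    simpa using Real.rpow_add_le_add_sub_mul_min hH.1.le hH.2.le hu hvu
  rw [fbmCovDet_eq_heron hH.1.ne' hu huv, div_mul_eq_mul_div, div_le_div_iff_of_pos_right four_pos]
  exact mul_sq_mul_sq_le_heron (Real.rpow_nonneg hu H) (Real.rpow_nonneg hvu H)
    (Real.rpow_le_rpow hu (by linarith) hH.1.le) (Real.rpow_le_rpow hvu (by linarith) hH.1.le)
    (by linarith [hH.2]) hv

lemma one_div_sqrt_fbmCovDet_le {H u v : ℝ} (hH : H ∈ Ioo (0:ℝ) 1) (hu : 0 ≤ u) (huv : u ≤ v) :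
    1 / √(fbmCovDet H u v) ≤ 2 / √(1 - H) * (u ^ (-H) * (v - u) ^ (-H)) := by
  have hH' : -H ≠ 0 := neg_ne_zero.2 hH.1.ne'
  -- On the axis and on the diagonal both sides vanish, the right one because `0 ^ (-H) = 0`.
  rcases hu.eq_or_lt with rfl | hu'
  · simp [fbmCovDet_zero_left hH.1.ne' huv, Real.zero_rpow hH']
  rcases huv.eq_or_lt with rfl | huv'
  · simp [fbmCovDet_self, Real.zero_rpow hH']
  have h1H : 0 < 1 - H := sub_pos.2 hH.2
  have hvu : 0 < v - u := sub_pos.2 huv'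
  have hlow : 0 < (1 - H) / 4 * ((u ^ H) ^ 2 * ((v - u) ^ H) ^ 2) := by positivity
  calc 1 / √(fbmCovDet H u v)
      ≤ 1 / √((1 - H) / 4 * ((u ^ H) ^ 2 * ((v - u) ^ H) ^ 2)) :=
        one_div_le_one_div_of_le (Real.sqrt_pos.2 hlow)
          (Real.sqrt_le_sqrt (fbmCovDet_lower_bound hH hu huv))
    _ = 2 / √(1 - H) * (u ^ (-H) * (v - u) ^ (-H)) := by
        have ha : 0 < u ^ H := Real.rpow_pos_of_pos hu' H
        have hc : 0 < (v - u) ^ H := Real.rpow_pos_of_pos hvu H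
        rw [show (1 - H) / 4 * ((u ^ H) ^ 2 * ((v - u) ^ H) ^ 2)
            = (1 - H) * (u ^ H * (v - u) ^ H / 2) ^ 2 by ring,
          Real.sqrt_mul h1H.le, Real.sqrt_sq (by positivity), Real.rpow_neg hu,
          Real.rpow_neg hvu.le]
        field_simp

lemma one_div_sqrt_fbmCovDet_le_indicator {H u v : ℝ} (hH : H ∈ Ioo (0:ℝ) 1)
    (hu : u ∈ Icc (0:ℝ) 1) (hv : v ∈ Icc (0:ℝ) 1) (huv : u ≤ v) :
    1 / √(fbmCovDet H u v) ≤ 2 / √(1 - H) *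
      ((Icc (0:ℝ) 1).indicator (· ^ (-H)) u * (Icc (0:ℝ) 1).indicator (· ^ (-H)) (v - u)) := by
  have hvu : v - u ∈ Icc (0:ℝ) 1 := ⟨sub_nonneg.2 huv, by linarith [hu.1, hv.2]⟩
  rw [indicator_of_mem hu, indicator_of_mem hvu]
  exact one_div_sqrt_fbmCovDet_le hH hu.1 huv

lemma measurable_fbmCovDet (H : ℝ) : Measurable (Function.uncurry (fbmCovDet H)) := by
  unfold Function.uncurry fbmCovDet fbmCov
  fun_prop

lemma integrable_indicator_rpow {r : ℝ} (hr : -1 < r) (a b : ℝ) :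
    Integrable ((Icc a b).indicator fun t : ℝ => t ^ r) :=
  (integrable_indicator_iff measurableSet_Icc).2 <|
    ((intervalIntegrable_iff' (f := fun t : ℝ => t ^ r)).1
      (intervalIntegral.intervalIntegrable_rpow' hr)).mono_set Icc_subset_uIcc

lemma MeasureTheory.Integrable.mul_prod_sub {G L : Type*} [MeasurableSpace G] [AddGroup G]
    [MeasurableAdd₂ G] [MeasurableNeg G] [NormedRing L] {μ : Measure G} [SFinite μ]
    [μ.IsAddRightInvariant] {f g : G → L} (hf : Integrable f μ) (hg : Integrable g μ) :
    Integrable (fun z : G × G => f z.1 * g (z.2 - z.1)) (μ.prod μ) :=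
  ((measurePreserving_prod_sub μ μ).integrable_comp (hf.mul_prod hg).aestronglyMeasurable).2
    (hf.mul_prod hg)

theorem fbm_cov_integral_finite (H : ℝ) (hH : H ∈ Ioo (0:ℝ) 1) :
    IntegrableOn
      (fun p : ℝ × ℝ =>
        1 / Real.sqrt (fbmCov H p.1 p.1 * fbmCov H p.2 p.2 - (fbmCov H p.1 p.2)^2))
      (Icc (0:ℝ) 1 ×ˢ Icc (0:ℝ) 1) volume := by
  set k := (Icc (0:ℝ) 1).indicator (· ^ (-H))
  set F : ℝ × ℝ → ℝ := fun p => k p.1 * k (p.2 - p.1)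
  have hk : Integrable k := integrable_indicator_rpow (by linarith [hH.2]) 0 1
  have hF : Integrable F (volume.prod volume) := hk.mul_prod_sub hk
  have hF_nonneg : ∀ p, 0 ≤ F p := fun p =>
    mul_nonneg (indicator_nonneg (fun t ht => Real.rpow_nonneg ht.1 _) _)
      (indicator_nonneg (fun t ht => Real.rpow_nonneg ht.1 _) _)
  have hbound : ∀ p ∈ Icc (0:ℝ) 1 ×ˢ Icc (0:ℝ) 1,
      1 / √(fbmCovDet H p.1 p.2) ≤ 2 / √(1 - H) * (F p + F p.swap) := by
    rintro ⟨u, v⟩ ⟨hu, hv⟩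
    rcases le_total u v with huv | hvu
    · refine (one_div_sqrt_fbmCovDet_le_indicator hH hu hv huv).trans ?_
      gcongr; exact le_add_of_nonneg_right (hF_nonneg _)
    · rw [fbmCovDet_comm]
      refine (one_div_sqrt_fbmCovDet_le_indicator hH hv hu hvu).trans ?_
      gcongr; exact le_add_of_nonneg_left (hF_nonneg _)
  refine Integrable.mono' ((hF.add hF.swap).const_mul (2 / √(1 - H))).integrableOn
    (measurable_const.div (measurable_fbmCovDet H).sqrt).aestronglyMeasurable ?_
  filter_upwards [ae_restrict_mem (measurableSet_Icc.prod measurableSet_Icc)] with p hp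
  rw [Real.norm_of_nonneg (by positivity)]
  exact hbound p hp
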